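/- arXiv:math/0002168 — 4 statements merged into one kernel-verified Lean document; each statement's English description precedes it below -/
import Mathlib

section
/- Let T₁, …, Tₙ be elements of SL(2,ℤ), each conjugate to T. If the product T₁ T₂ ⋯ Tₙ equals −I, then n ≡ 6 (mod 12). -/
/-- `SL(2,ℤ)`: 2×2 integer matrices of determinant 1. -/
abbrev SL2Z : Type := Matrix.SpecialLinearGroup (Fin 2) ℤ

/-- An element of `SL(2,ℤ)` is a (right) Dehn twist if it is conjugate to `T = [[1,1],[0,1]]`. -/
def IsDehnTwist (x : SL2Z) : Prop := IsConj ModularGroup.T x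

/-- Hom `SL(2, ℤ/3) → ℤ/3` (additively), given by an explicit polynomial. -/
def f3 (M : Matrix.SpecialLinearGroup (Fin 2) (ZMod 3)) : ZMod 3 :=
  let a := M.1 0 0; let b := M.1 0 1; let c := M.1 1 0; let d := M.1 1 1
  a*b + 2*a*c + 2*b*d + a*a*b*d

/-- Hom `SL(2, ℤ/4) → ℤ/4` (additively), given by a lookup table. -/
def f4 (M : Matrix.SpecialLinearGroup (Fin 2) (ZMod 4)) : ZMod 4 :=
  let p : ZMod 4 × ZMod 4 × ZMod 4 × ZMod 4 := (M.1 0 0, M.1 0 1, M.1 1 0, M.1 1 1)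
  if p = (0,1,3,0) then 3 else
  if p = (0,1,3,1) then 2 else
  if p = (0,1,3,2) then 1 else
  if p = (0,1,3,3) then 0 else
  if p = (0,3,1,0) then 1 else
  if p = (0,3,1,1) then 2 else
  if p = (0,3,1,2) then 3 else
  if p = (0,3,1,3) then 0 else
  if p = (1,0,0,1) then 0 else
  if p = (1,0,1,1) then 3 else
  if p = (1,0,2,1) then 2 else
  if p = (1,0,3,1) then 1 else
  if p = (1,1,0,1) then 1 else
  if p = (1,1,1,2) then 0 else
  if p = (1,1,2,3) then 3 else
  if p = (1,1,3,0) then 2 else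
  if p = (1,2,0,1) then 2 else
  if p = (1,2,1,3) then 1 else
  if p = (1,2,2,1) then 0 else
  if p = (1,2,3,3) then 3 else
  if p = (1,3,0,1) then 3 else
  if p = (1,3,1,0) then 2 else
  if p = (1,3,2,3) then 1 else
  if p = (1,3,3,2) then 0 else
  if p = (2,1,1,1) then 0 else
  if p = (2,1,1,3) then 2 else
  if p = (2,1,3,0) then 1 else
  if p = (2,1,3,2) then 3 else
  if p = (2,3,1,0) then 3 else
  if p = (2,3,1,2) then 1 else
  if p = (2,3,3,1) then 0 else
  if p = (2,3,3,3) then 2 else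
  if p = (3,0,0,3) then 2 else
  if p = (3,0,1,3) then 3 else
  if p = (3,0,2,3) then 0 else
  if p = (3,0,3,3) then 1 else
  if p = (3,1,0,3) then 1 else
  if p = (3,1,1,2) then 2 else
  if p = (3,1,2,1) then 3 else
  if p = (3,1,3,0) then 0 else
  if p = (3,2,0,3) then 0 else
  if p = (3,2,1,1) then 1 else
  if p = (3,2,2,3) then 2 else
  if p = (3,2,3,1) then 3 else
  if p = (3,3,0,3) then 3 else
  if p = (3,3,1,0) then 0 else
  if p = (3,3,2,1) then 1 else
  if p = (3,3,3,2) then 2 else  0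

lemma f3_mul : ∀ x y, f3 (x*y) = f3 x + f3 y := by decide

set_option maxHeartbeats 4000000 in
set_option maxRecDepth 10000 in
lemma f4_mul : ∀ x y, f4 (x*y) = f4 x + f4 y := by decide

def F3 (x : SL2Z) : ZMod 3 :=
  f3 (Matrix.SpecialLinearGroup.map (Int.castRingHom (ZMod 3)) x)

def F4 (x : SL2Z) : ZMod 4 :=
  f4 (Matrix.SpecialLinearGroup.map (Int.castRingHom (ZMod 4)) x)

lemma F3_mul (x y : SL2Z) : F3 (x*y) = F3 x + F3 y := by
  unfold F3; rw [map_mul]; exact f3_mul _ _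

lemma F4_mul (x y : SL2Z) : F4 (x*y) = F4 x + F4 y := by
  unfold F4; rw [map_mul]; exact f4_mul _ _

lemma F3_one : F3 1 = 0 := by unfold F3; rw [map_one]; decide

lemma F4_one : F4 1 = 0 := by unfold F4; rw [map_one]; decide

lemma F3_T : F3 ModularGroup.T = 1 := by decide

lemma F4_T : F4 ModularGroup.T = 1 := by decide

lemma F3_negOne : F3 (-1) = 0 := by decide

lemma F4_negOne : F4 (-1) = 2 := by decide

section
variable {A : Type} [AddCommMonoid A]

lemma F_conj (f : SL2Z → A) (h1 : f 1 = 0) (hm : ∀ x y, f (x*y) = f x + f y)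
    {x : SL2Z} (h : IsDehnTwist x) : f x = f ModularGroup.T := by
  obtain ⟨g, hg⟩ := isConj_iff.mp h
  have hginv : f g + f g⁻¹ = 0 := by rw [← hm, mul_inv_cancel, h1]
  calc f x = f (g * ModularGroup.T * g⁻¹) := by rw [hg]
    _ = f g + f ModularGroup.T + f g⁻¹ := by rw [hm, hm]
    _ = f ModularGroup.T := by
        rw [add_comm (f g), add_assoc, hginv, add_zero]

lemma F_prod (f : SL2Z → A) (h1 : f 1 = 0) (hm : ∀ x y, f (x*y) = f x + f y) :
    ∀ L : List SL2Z, f L.prod = (L.map f).sum := by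
  intro L
  induction L with
  | nil => simpa using h1
  | cons a t ih => simp [hm, ih]

lemma F_count (f : SL2Z → A) (h1 : f 1 = 0) (hm : ∀ x y, f (x*y) = f x + f y)
    (L : List SL2Z) (hL : ∀ x ∈ L, IsDehnTwist x) :
    f L.prod = L.length • f ModularGroup.T := by
  rw [F_prod f h1 hm]
  have : L.map f = List.replicate L.length (f ModularGroup.T) := by
    apply List.eq_replicate_iff.mpr
    constructor
    · simp
    · intro b hb
      obtain ⟨x, hx, rfl⟩ := List.mem_map.mp hb
      exact F_conj f h1 hm (hL x hx)
  rw [this, List.sum_replicate]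

end

/-- If a product of `n` elements, each conjugate to `T`, equals `-I`, then `n ≡ 6 (mod 12)`. -/
theorem stmt_8 (L : List SL2Z) (hL : ∀ x ∈ L, IsDehnTwist x)
    (hprod : L.prod = -1) : L.length ≡ 6 [MOD 12] := by
  have h3 : (L.length : ZMod 3) = 0 := by
    have := F_count F3 F3_one F3_mul L hL
    rw [hprod, F3_negOne, F3_T] at this
    simpa [nsmul_eq_mul] using this.symm
  have h4 : (L.length : ZMod 4) = 2 := by
    have := F_count F4 F4_one F4_mul L hL
    rw [hprod, F4_negOne, F4_T] at this
    simpa [nsmul_eq_mul] using this.symm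
  have m3 : L.length % 3 = 0 % 3 := by
    have := (ZMod.natCast_eq_natCast_iff L.length 0 3).mp (by simpa using h3)
    exact this
  have m4 : L.length % 4 = 2 % 4 := by
    have := (ZMod.natCast_eq_natCast_iff L.length 2 4).mp (by simpa using h4)
    exact this
  show L.length % 12 = 6 % 12
  omega
end

section
/- The central element −I of SL(2,ℤ) can be written as a product of 6 elements each conjugate to T, and it cannot be written as a product of fewer than 6 elements each conjugate to T. -/
open Matrix ModularGroup

theorem orderOf_map_dvd_length_of_forall_isConj {G M : Type*} [Monoid G] [CommMonoid M]
    (f : G →* M) {t : G} {L : List G} (hL : ∀ x ∈ L, IsConj t x) (h : f L.prod = 1) :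
    orderOf (f t) ∣ L.length := by
  have hconst : ∀ y ∈ L.map f, y = f t := by
    simp only [List.mem_map]
    rintro _ ⟨x, hx, rfl⟩
    exact (isConj_iff_eq.mp (f.map_isConj (hL x hx))).symm
  refine orderOf_dvd_of_pow_eq_one ?_
  rwa [map_list_prod, List.prod_eq_pow_card _ _ hconst, List.length_map] at h

lemma isDehnTwist_T : IsDehnTwist T := IsConj.refl T

lemma isDehnTwist_conj (g : SL2Z) : IsDehnTwist (g * T * g⁻¹) := isConj_iff.mpr ⟨g, rfl⟩

def signModTwo : SL2Z →* ℤˣ :=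
  Equiv.Perm.sign.comp ((MulAction.toPermHom _ (Fin 2 → ZMod 2)).comp
    (SpecialLinearGroup.map (Int.castRingHom (ZMod 2))))

-- A polynomial interpolation of the abelianization map, found by computer; the homomorphism
-- property is checked over all 24 × 24 pairs.
def charSL2ZMod3 : SpecialLinearGroup (Fin 2) (ZMod 3) →* Multiplicative (ZMod 3) where
  toFun x := .ofAdd (x 1 0 * x 1 1 + x 0 1 * x 1 1 + 2 * x 0 1 * x 1 0 ^ 2 * x 1 1 + x 0 0 * x 1 0)
  map_one' := by decide
  map_mul' := by decide

def charModThree : SL2Z →* Multiplicative (ZMod 3) :=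
  charSL2ZMod3.comp (SpecialLinearGroup.map (Int.castRingHom (ZMod 3)))

lemma signModTwo_neg_one : signModTwo (-1) = 1 := by decide

lemma orderOf_signModTwo_T : orderOf (signModTwo T) = 2 :=
  orderOf_eq_prime (by decide) (by decide)

lemma charModThree_neg_one : charModThree (-1) = 1 := by decide

lemma orderOf_charModThree_T : orderOf (charModThree T) = 3 :=
  orderOf_eq_prime (by decide) (by decide)

lemma T_mul_conj_S_T_pow_three : (T * (S * T * S⁻¹)) ^ 3 = -1 := by decide

/-- `-I` is a product of 6 conjugates of `T`, and not a product of fewer than 6. -/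
theorem stmt_12 :
    (∃ L : List SL2Z, (∀ x ∈ L, IsDehnTwist x) ∧ L.length = 6 ∧ L.prod = -1) ∧
    (∀ L : List SL2Z, (∀ x ∈ L, IsDehnTwist x) → L.prod = -1 → 6 ≤ L.length) := by
  constructor
  · refine ⟨[T, S * T * S⁻¹, T, S * T * S⁻¹, T, S * T * S⁻¹], ?_, rfl, ?_⟩
    · simp [isDehnTwist_T, isDehnTwist_conj]
    · simpa [pow_succ, mul_assoc] using T_mul_conj_S_T_pow_three
  · intro L hL hprod
    have h2 : 2 ∣ L.length := orderOf_signModTwo_T ▸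
      orderOf_map_dvd_length_of_forall_isConj signModTwo hL (by rw [hprod, signModTwo_neg_one])
    have h3 : 3 ∣ L.length := orderOf_charModThree_T ▸
      orderOf_map_dvd_length_of_forall_isConj charModThree hL (by rw [hprod, charModThree_neg_one])
    have h0 : L.length ≠ 0 := by
      intro h
      rw [List.length_eq_zero_iff.mp h, List.prod_nil] at hprod
      exact absurd hprod (by decide)
    omega
end

section
/- The matrix [[0,1],[-1,0]] ∈ SL(2,ℤ) (an element of order 4) can be written as a product of 3 elements each conjugate to T, and it cannot be written as a product of fewer than 3 elements each conjugate to T. -/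
open ModularGroup Matrix.SpecialLinearGroup

theorem MonoidHom.map_list_prod_of_forall_isConj {G M : Type*} [Monoid G] [CommMonoid M]
    (f : G →* M) {t : G} {L : List G} (hL : ∀ x ∈ L, IsConj t x) :
    f L.prod = f t ^ L.length := by
  rw [map_list_prod, List.prod_eq_pow_card _ (f t), List.length_map]
  simp only [List.mem_map, forall_exists_index, and_imp, forall_apply_eq_imp_iff₂]
  exact fun x hx ↦ (isConj_iff_eq.1 (f.map_isConj (hL x hx))).symm

theorem Matrix.SpecialLinearGroup.trace_eq_of_isConj {n R : Type*} [DecidableEq n] [Fintype n]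
    [CommRing R] {a b : SpecialLinearGroup n R} (h : IsConj a b) :
    (a : Matrix n n R).trace = (b : Matrix n n R).trace := by
  obtain ⟨c, rfl⟩ := isConj_iff.1 h
  rw [coe_mul, coe_mul, Matrix.trace_mul_cycle, ← coe_mul, inv_mul_cancel, coe_one, one_mul]

theorem S_inv_eq_mk : S⁻¹ = (⟨!![0, 1; -1, 0], by norm_num [Matrix.det_fin_two_of]⟩ : SL2Z) := by
  ext : 1
  simp [coe_S, Matrix.adjugate_fin_two]

theorem prod_T_conj_T_eq_S_inv : [T, S * T * S⁻¹, T].prod = S⁻¹ := by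
  ext : 1
  simp [coe_S, coe_T, Matrix.adjugate_fin_two]

def modTwoSign : SL2Z →* ℤˣ :=
  Equiv.Perm.sign.comp ((MulAction.toPermHom _ (Fin 2 → ZMod 2)).comp
    (map (Int.castRingHom (ZMod 2))))

theorem modTwoSign_T : modTwoSign T = -1 := by
  decide

theorem modTwoSign_S_inv : modTwoSign S⁻¹ = -1 := by
  decide

theorem odd_length_of_prod_eq_S_inv {L : List SL2Z} (hL : ∀ x ∈ L, IsDehnTwist x)
    (hprod : L.prod = S⁻¹) : Odd L.length := by
  have h := modTwoSign.map_list_prod_of_forall_isConj hL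
  rw [hprod, modTwoSign_S_inv, modTwoSign_T, eq_comm] at h
  exact (neg_one_pow_eq_neg_one_iff_odd (by decide)).1 h

theorem not_isDehnTwist_S_inv : ¬ IsDehnTwist S⁻¹ := by
  intro h
  have htr := trace_eq_of_isConj h
  simp [coe_T, coe_S, Matrix.adjugate_fin_two, Matrix.trace_fin_two] at htr

/-- The matrix `[[0,1],[-1,0]]` of order 4 is a product of 3 conjugates of `T`, and not a
product of fewer than 3. -/
theorem stmt_13 :
    (∃ L : List SL2Z, (∀ x ∈ L, IsDehnTwist x) ∧ L.length = 3 ∧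
      L.prod = (⟨!![0, 1; -1, 0], by norm_num [Matrix.det_fin_two_of]⟩ : SL2Z)) ∧
    (∀ L : List SL2Z, (∀ x ∈ L, IsDehnTwist x) →
      L.prod = (⟨!![0, 1; -1, 0], by norm_num [Matrix.det_fin_two_of]⟩ : SL2Z) →
      3 ≤ L.length) := by
  rw [← S_inv_eq_mk]
  refine ⟨⟨[T, S * T * S⁻¹, T], ?_, rfl, prod_T_conj_T_eq_S_inv⟩, fun L hL hprod ↦ ?_⟩
  · simp only [List.mem_cons, List.not_mem_nil, or_false]
    rintro x (rfl | rfl | rfl)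
    · exact IsConj.refl T
    · exact isConj_iff.2 ⟨S, rfl⟩
    · exact IsConj.refl T
  have hodd := odd_length_of_prod_eq_S_inv hL hprod
  have hne_one : L.length ≠ 1 := fun h ↦ by
    obtain ⟨x, rfl⟩ := List.length_eq_one_iff.1 h
    rw [List.prod_singleton] at hprod
    exact not_isDehnTwist_S_inv (hprod ▸ hL x (List.mem_singleton_self x))
  obtain ⟨k, hk⟩ := hodd
  omega
end

section
/- Let G and H be groups. Every element of finite order in the free product G ∗ H is conjugate (in G ∗ H) to an element of the canonical image of G or to an element of the canonical image of H. -/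
/-!
Write `x` as a reduced word and induct on its length. If the first letter `a` and the last
letter `b` lie in the same factor, then `x = a v b` is conjugate to `(b * a) v`, a shorter word.
Otherwise the word is cyclically reduced: concatenating it with itself gives the reduced words of
the powers of `x`, none of which is empty, so `x` has infinite order.
-/

namespace Monoid.CoprodI

variable {ι : Type*} {M : ι → Type*}

section Monoid

variable [∀ i, Monoid (M i)]

theorem Word.prod_injective : Function.Injective (Word.prod : Word M → CoprodI M) := by
  classical
  exact Word.equiv.symm.injective

theorem Word.exists_prod_eq_of_mul {i : ι} (m : M i) (w : Word M) (hw : w.fstIdx ≠ some i) :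
    ∃ u : Word M, u.prod = of m * w.prod ∧ u.toList.length ≤ w.toList.length + 1 := by
  by_cases hm : m = 1
  · exact ⟨w, by rw [hm, map_one, one_mul], Nat.le_succ _⟩
  · exact ⟨Word.cons m w hw hm, Word.prod_cons _ _ _ hm hw, le_rfl⟩

namespace NeWord

theorem prod_ne_one {i j : ι} (w : NeWord M i j) : w.prod ≠ 1 := fun h =>
  w.toList_ne_nil <| congrArg Word.toList <| Word.prod_injective (h.trans Word.prod_empty.symm)

theorem exists_prod_eq_pow {i j : ι} (w : NeWord M i j) (hij : i ≠ j) (n : ℕ) :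
    ∃ v : NeWord M i j, v.prod = w.prod ^ (n + 1) := by
  induction n with
  | zero => exact ⟨w, (pow_one _).symm⟩
  | succ n ih =>
    obtain ⟨v, hv⟩ := ih
    exact ⟨append w hij.symm v, by rw [append_prod, hv, pow_succ' _ (n + 1)]⟩

theorem not_isOfFinOrder_prod {i j : ι} (w : NeWord M i j) (hij : i ≠ j) :
    ¬IsOfFinOrder w.prod := by
  intro hw
  obtain ⟨n, hn, hpow⟩ := isOfFinOrder_iff_pow_eq_one.mp hw
  obtain ⟨v, hv⟩ := w.exists_prod_eq_pow hij (n - 1)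
  exact v.prod_ne_one (by rwa [hv, Nat.sub_add_cancel hn])

end NeWord

theorem Word.not_isOfFinOrder_prod {i j : ι} (w : Word M) {a : M i} {b : M j}
    (hhead : w.toList.head? = some ⟨i, a⟩) (hlast : w.toList.getLast? = some ⟨j, b⟩)
    (hij : i ≠ j) : ¬IsOfFinOrder w.prod := by
  obtain ⟨i', j', w', rfl⟩ := NeWord.of_word w (by rintro rfl; simp [Word.empty] at hhead)
  obtain rfl : i' = i := congrArg Sigma.fst (Option.some.inj (w'.toList_head?.symm.trans hhead))
  obtain rfl : j' = j := congrArg Sigma.fst (Option.some.inj (w'.toList_getLast?.symm.trans hlast))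
  exact w'.not_isOfFinOrder_prod hij

end Monoid

variable [∀ i, Group (M i)]

theorem Word.exists_isConj_prod_length_lt {i : ι} (w : Word M) {a b : M i}
    {mid : List (Σ i, M i)} (hw : w.toList = ⟨i, a⟩ :: (mid ++ [⟨i, b⟩])) :
    ∃ u : Word M, u.toList.length < w.toList.length ∧ IsConj u.prod w.prod := by
  have hchain := w.chain_ne
  rw [hw, List.isChain_cons] at hchain
  let v : Word M :=
    { toList := mid
      ne_one := fun c hc => w.ne_one c (by simp [hw, hc])
      chain_ne := hchain.2.infix ⟨[], [_], rfl⟩ }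
  have hv : v.fstIdx ≠ some i := Word.fstIdx_ne_iff.mpr fun c hc =>
    hchain.1 c (List.mem_head?_append_of_mem_head? hc)
  obtain ⟨u, hu, hlen⟩ := v.exists_prod_eq_of_mul (b * a) hv
  refine ⟨u, by simp [hw]; omega, isConj_iff.mpr ⟨(of b)⁻¹, ?_⟩⟩
  rw [hu, map_mul]
  simp [Word.prod, hw, v, mul_assoc]

theorem exists_isConj_of_of_isOfFinOrder [Nonempty ι] (x : CoprodI M) (hx : IsOfFinOrder x) :
    ∃ (i : ι) (m : M i), IsConj (of m) x := by
  classical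
  obtain ⟨w, rfl⟩ : ∃ w : Word M, w.prod = x := Word.equiv.symm.surjective x
  induction hn : w.toList.length using Nat.strong_induction_on generalizing w with
  | _ n ih =>
  rcases hw : w.toList with _ | ⟨⟨i, a⟩, l⟩
  · exact ⟨Classical.arbitrary ι, 1, by simp [Word.prod, hw]⟩
  rcases l.eq_nil_or_concat' with rfl | ⟨mid, ⟨j, b⟩, rfl⟩
  · exact ⟨i, a, by simpa [Word.prod, hw] using IsConj.refl (of a)⟩
  by_cases hij : i = j
  · subst hij
    obtain ⟨u, hlen, hconj⟩ := w.exists_isConj_prod_length_lt hw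
    obtain ⟨k, m, hm⟩ := ih _ (hn ▸ hlen) u (hconj.symm.isOfFinOrder hx) rfl
    exact ⟨k, m, hm.trans hconj⟩
  · exact absurd hx (w.not_isOfFinOrder_prod (a := a) (b := b) (by simp [hw])
      (by rw [hw, ← List.cons_append, List.getLast?_concat]) hij)

end Monoid.CoprodI

namespace Monoid.Coprod

open CoprodI

universe u v

variable {G : Type u} {H : Type v} [Group G] [Group H]

variable (G H) in
abbrev boolFactor : Bool → Type (max u v)
  | true => ULift.{v} G
  | false => ULift.{u} H

instance : ∀ b, Group (boolFactor G H b)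
  | true => inferInstanceAs (Group (ULift G))
  | false => inferInstanceAs (Group (ULift H))

def toCoprodI : G ∗ H →* CoprodI (boolFactor G H) :=
  lift ((of (i := true)).comp MulEquiv.ulift.symm.toMonoidHom)
    ((of (i := false)).comp MulEquiv.ulift.symm.toMonoidHom)

def ofCoprodI : CoprodI (boolFactor G H) →* G ∗ H :=
  CoprodI.lift fun
    | true => inl.comp MulEquiv.ulift.toMonoidHom
    | false => inr.comp MulEquiv.ulift.toMonoidHom

theorem ofCoprodI_toCoprodI (x : G ∗ H) : ofCoprodI (toCoprodI x) = x :=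
  DFunLike.congr_fun (hom_ext (f := ofCoprodI.comp toCoprodI) (g := .id _) rfl rfl) x

end Monoid.Coprod

/-- Every element of finite order in a free product `G ∗ H` is conjugate to an element of
the canonical image of `G` or of the canonical image of `H`. -/
theorem stmt_17 {G H : Type*} [Group G] [Group H] (x : Monoid.Coprod G H)
    (hx : IsOfFinOrder x) :
    (∃ g : G, IsConj (Monoid.Coprod.inl g) x) ∨
    (∃ h : H, IsConj (Monoid.Coprod.inr h) x) := by
  obtain ⟨b, m, hm⟩ := Monoid.CoprodI.exists_isConj_of_of_isOfFinOrder
    (Monoid.Coprod.toCoprodI x) ((Monoid.Coprod.toCoprodI).isOfFinOrder hx)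
  have hconj := Monoid.Coprod.ofCoprodI.map_isConj hm
  rw [Monoid.Coprod.ofCoprodI_toCoprodI] at hconj
  cases b
  · exact Or.inr ⟨m.down, hconj⟩
  · exact Or.inl ⟨m.down, hconj⟩
end
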